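/- arXiv:1308.2314 — 6 statements merged into one kernel-verified Lean document; each statement's English description precedes it below -/
import Mathlib

section
/- The Kustaanheimo-Stiefel map K.S.(z,w) = (Q, P) = (z̄ i z, z̄ i w / (2|z|²)), defined for z ≠ 0, is constant on the circles {(e^{iθ} z, e^{iθ} w) : θ ∈ ℝ}; conversely, if K.S.(z,w) = K.S.(z',w') then there exists θ with (z',w') = (e^{iθ} z, e^{iθ} w), provided both points lie in Σ¹ = {(z,w) : Re{z̄ i w} = 0, z ≠ 0}. -/
/-- The quaternion unit `i`. -/
def qi : Quaternion ℝ := ⟨0,1,0,0⟩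

/-- The Kustaanheimo-Stiefel map (z,w) ↦ (Q,P) = (z̄ i z, z̄ i w / (2|z|²)). -/
noncomputable def KS (p : Quaternion ℝ × Quaternion ℝ) : Quaternion ℝ × Quaternion ℝ :=
  (star p.1 * qi * p.1, ((2 * ‖p.1‖ ^ 2)⁻¹ : ℝ) • (star p.1 * qi * p.2))

/-- e^{iθ} = cos θ + i sin θ. -/
noncomputable def eiθ (θ : ℝ) : Quaternion ℝ :=
  Real.cos θ • (1 : Quaternion ℝ) + Real.sin θ • qi

/-!
Left multiplication by a unit quaternion `u` with `ū i u = i`, i.e. a unit commuting with `i`,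
leaves both `z̄ i z` and `z̄ i w` unchanged; the units commuting with `i` are the unit complex
numbers `e^{iθ}`. Conversely, `Q = z̄ i z` has norm `|z|²`, so equal `Q`'s force `|z'| = |z|`,
and `u = z' z⁻¹` is then a unit with `ū i u = i`, hence `u = e^{iθ}`. Finally `P` determines
`z̄ i w`, and `z̄ i` is invertible, so `w' = u w`.
-/

open scoped Quaternion

theorem star_mul_mul_mul_of_star_conj_eq {R : Type*} [Monoid R] [StarMul R] {u a : R}
    (h : star u * a * u = a) (z w : R) : star (u * z) * a * (u * w) = star z * a * w := by
  calc star (u * z) * a * (u * w) = star z * (star u * a * u) * w := by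
        simp only [star_mul, mul_assoc]
    _ = star z * a * w := by rw [h]

namespace Quaternion

theorem norm_coeComplex (c : ℂ) : ‖(c : ℍ)‖ = ‖c‖ := by
  rw [norm_eq_sqrt_real_inner, inner_self, Complex.norm_def, normSq_def', Complex.normSq_apply]
  simp [sq]

theorem mem_unitary_of_norm_eq_one {u : ℍ} (hu : ‖u‖ = 1) : u ∈ unitary ℍ := by
  have hnormSq : normSq u = 1 := by rw [normSq_eq_norm_mul_self, hu, one_mul]
  exact Unitary.mem_iff.mpr
    ⟨by rw [star_mul_self, hnormSq, coe_one], by rw [self_mul_star, hnormSq, coe_one]⟩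

theorem exists_coeComplex_eq_of_commute {u : ℍ} (h : Commute (Complex.I : ℍ) u) :
    ∃ c : ℂ, u = c := by
  have hJ := congrArg QuaternionAlgebra.imJ h.eq
  have hK := congrArg QuaternionAlgebra.imK h.eq
  simp only [imJ_mul, imK_mul, re_coeComplex, imI_coeComplex, imJ_coeComplex,
    imK_coeComplex, Complex.I_re, Complex.I_im] at hJ hK
  exact ⟨⟨u.re, u.imI⟩, by ext <;> simp <;> linarith⟩

end Quaternion

open Quaternion

theorem qi_eq_coeComplex_I : qi = ((Complex.I : ℂ) : ℍ) := by
  ext <;> simp [qi]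

theorem qi_ne_zero : qi ≠ 0 := by
  rw [← norm_ne_zero_iff, qi_eq_coeComplex_I, norm_coeComplex, Complex.norm_I]
  exact one_ne_zero

theorem eiθ_eq_coeComplex_exp (θ : ℝ) : eiθ θ = ((Complex.exp (θ * Complex.I) : ℂ) : ℍ) := by
  ext <;> simp [eiθ, qi_eq_coeComplex_I, Complex.exp_ofReal_mul_I_re, Complex.exp_ofReal_mul_I_im]

theorem norm_eiθ (θ : ℝ) : ‖eiθ θ‖ = 1 := by
  rw [eiθ_eq_coeComplex_exp, norm_coeComplex, Complex.norm_exp_ofReal_mul_I]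

theorem commute_qi_eiθ (θ : ℝ) : Commute qi (eiθ θ) := by
  rw [qi_eq_coeComplex_I, eiθ_eq_coeComplex_exp, ← coe_ofComplex]
  exact (Commute.all _ _).map ofComplex

theorem exists_eiθ_of_commute_qi {u : ℍ} (hu : ‖u‖ = 1) (h : Commute qi u) :
    ∃ θ : ℝ, u = eiθ θ := by
  rw [qi_eq_coeComplex_I] at h
  obtain ⟨c, rfl⟩ := exists_coeComplex_eq_of_commute h
  obtain ⟨θ, hθ⟩ := (Complex.norm_eq_one_iff c).mp (by rwa [norm_coeComplex] at hu)
  exact ⟨θ, by rw [eiθ_eq_coeComplex_exp, hθ]⟩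

theorem norm_star_mul_qi_mul_self (v : ℍ) : ‖star v * qi * v‖ = ‖v‖ ^ 2 := by
  rw [norm_mul, norm_mul, norm_star, qi_eq_coeComplex_I, norm_coeComplex, Complex.norm_I]
  ring

theorem KS_mul_of_mem_unitary {u : ℍ} (hu : u ∈ unitary ℍ) (hc : Commute qi u) (z w : ℍ) :
    KS (u * z, u * w) = KS (z, w) := by
  have hconj := (commute_unitary_iff_star_left_conjugate hu).mp hc.symm
  simp only [KS, star_mul_mul_mul_of_star_conj_eq hconj, CStarRing.norm_mem_unitary_mul z hu]

theorem KS_eiθ_mul (z w : ℍ) (θ : ℝ) : KS (eiθ θ * z, eiθ θ * w) = KS (z, w) :=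
  KS_mul_of_mem_unitary (mem_unitary_of_norm_eq_one (norm_eiθ θ)) (commute_qi_eiθ θ) z w

theorem KS_injective_snd {z : ℍ} (hz : z ≠ 0) : Function.Injective fun w => KS (z, w) := by
  intro w w' h
  have hscale : ((2 * ‖z‖ ^ 2)⁻¹ : ℝ) ≠ 0 := by
    have := norm_ne_zero_iff.mpr hz
    positivity
  have hP := smul_right_injective ℍ hscale (congrArg Prod.snd h)
  exact mul_left_cancel₀ (mul_ne_zero (star_ne_zero.mpr hz) qi_ne_zero) hP

theorem exists_eiθ_mul_of_star_mul_qi_mul_eq {z z' : ℍ} (hz : z ≠ 0)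
    (h : star z * qi * z = star z' * qi * z') : ∃ θ : ℝ, z' = eiθ θ * z := by
  set u := z' * z⁻¹ with hu_def
  have hnorm : ‖z'‖ = ‖z‖ := by
    refine (sq_eq_sq₀ (norm_nonneg _) (norm_nonneg _)).mp ?_
    rw [← norm_star_mul_qi_mul_self, ← norm_star_mul_qi_mul_self, h]
  have hu : ‖u‖ = 1 := by
    rw [hu_def, norm_mul, norm_inv, hnorm, mul_inv_cancel₀ (norm_ne_zero_iff.mpr hz)]
  have hconj : star u * qi * u = qi := by
    calc star u * qi * u = star z⁻¹ * (star z' * qi * z') * z⁻¹ := by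
          simp only [hu_def, star_mul, mul_assoc]
      _ = star (z * z⁻¹) * qi * (z * z⁻¹) := by
          rw [← h]; simp only [star_mul, mul_assoc]
      _ = qi := by rw [mul_inv_cancel₀ hz, star_one, one_mul, mul_one]
  have hcomm : Commute qi u :=
    ((commute_unitary_iff_star_left_conjugate (mem_unitary_of_norm_eq_one hu)).mpr hconj).symm
  obtain ⟨θ, hθ⟩ := exists_eiθ_of_commute_qi hu hcomm
  exact ⟨θ, by rw [← hθ, hu_def, mul_assoc, inv_mul_cancel₀ hz, mul_one]⟩

theorem KS_fibers :
    (∀ (z w : Quaternion ℝ) (θ : ℝ), KS (eiθ θ * z, eiθ θ * w) = KS (z, w)) ∧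
    (∀ z w z' w' : Quaternion ℝ,
      z ≠ 0 → (star z * qi * w).re = 0 →
      z' ≠ 0 → (star z' * qi * w').re = 0 →
      KS (z, w) = KS (z', w') →
      ∃ θ : ℝ, z' = eiθ θ * z ∧ w' = eiθ θ * w) := by
  refine ⟨KS_eiθ_mul, fun z w z' w' hz _ hz' _ h => ?_⟩
  obtain ⟨θ, rfl⟩ := exists_eiθ_mul_of_star_mul_qi_mul_eq hz (congrArg Prod.fst h)
  exact ⟨θ, rfl, (KS_injective_snd hz' (by simp only [KS_eiθ_mul, h])).symm⟩
end

section
/- The pullback of the canonical symplectic form under the Kustaanheimo-Stiefel map agrees with the canonical form on the bilinear cone: on Σ¹ = {(z,w) ∈ ℍ×ℍ : Re{z̄ i w} = 0, z ≠ 0}, one has (K.S.)* Re{dP̄ ∧ dQ} = Re{dw̄ ∧ dz} restricted to Σ¹, where K.S.(z,w) = (Q,P) = (z̄ i z, z̄ i w/(2|z|²)). -/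
/-- The canonical 2-form Re{dw̄ ∧ dz} on T*ℍ ≅ ℍ×ℍ, evaluated on two tangent
vectors u = (uz,uw), v = (vz,vw): Re{ū_w v_z − v̄_w u_z}. -/
noncomputable def omegaH (u v : Quaternion ℝ × Quaternion ℝ) : ℝ :=
  (star u.2 * v.1 - star v.2 * u.1).re

open Quaternion

instance : StarModule ℝ ℍ[ℝ] := ⟨fun r x => by simp [Quaternion.star_smul]⟩

lemma qi_re : qi.re = 0 := rfl
lemma qi_imI : qi.imI = 1 := rfl
lemma qi_imJ : qi.imJ = 0 := rfl
lemma qi_imK : qi.imK = 0 := rfl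

theorem omegaH_smul_snd (c : ℝ) (p q : ℍ[ℝ] × ℍ[ℝ]) :
    omegaH (p.1, c • p.2) (q.1, c • q.2) = c * omegaH p q := by
  simp only [omegaH, Quaternion.star_smul, smul_mul_assoc, ← smul_sub, re_smul, smul_eq_mul]

/-- `fderiv ℝ KS (z, w) u` with its second component multiplied by `2|z|⁴`. -/
noncomputable def ksTangent (z w : ℍ[ℝ]) (u : ℍ[ℝ] × ℍ[ℝ]) : ℍ[ℝ] × ℍ[ℝ] :=
  (star u.1 * qi * z + star z * qi * u.1,
    normSq z • (star u.1 * qi * w + star z * qi * u.2) - (2 * inner ℝ z u.1) • (star z * qi * w))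

theorem fderiv_KS_apply {z : ℍ[ℝ]} (hz : z ≠ 0) (w : ℍ[ℝ]) (u : ℍ[ℝ] × ℍ[ℝ]) :
    fderiv ℝ KS (z, w) u = ((ksTangent z w u).1, (2 * normSq z ^ 2)⁻¹ • (ksTangent z w u).2) := by
  have hN : normSq z ≠ 0 := normSq_ne_zero.mpr hz
  have hnorm : ‖z‖ ^ 2 = normSq z := by rw [sq, ← normSq_eq_norm_mul_self]
  have hstar := (hasFDerivAt_fst (𝕜 := ℝ) (p := (z, w))).star.mul_const' qi
  have hsq : HasFDerivAt (fun p : ℍ[ℝ] × ℍ[ℝ] => 2 * ‖p.1‖ ^ 2) _ (z, w) :=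
    hasFDerivAt_fst.norm_sq.const_mul 2
  have hinv := (hasDerivAt_inv (by positivity : 2 * ‖z‖ ^ 2 ≠ 0)).comp_hasFDerivAt (z, w) hsq
  have hKS : HasFDerivAt KS _ (z, w) :=
    (hstar.mul' hasFDerivAt_fst).prodMk (hinv.smul (hstar.mul' hasFDerivAt_snd))
  rw [hKS.fderiv]
  simp only [ksTangent, ContinuousLinearMap.prod_apply, add_apply, smul_apply,
    ContinuousLinearMap.comp_apply, ContinuousLinearMap.smulRight_apply,
    ContinuousLinearMap.coe_fst', ContinuousLinearMap.coe_snd', ContinuousLinearEquiv.coe_coe,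
    starL'_apply, innerSL_apply_apply, Function.comp_apply, hnorm, smul_eq_mul, op_smul_eq_mul,
    nsmul_eq_mul, Nat.cast_ofNat]
  ext1
  · exact add_comm _ _
  · match_scalars <;> field_simp

theorem omegaH_ksTangent (z w : ℍ[ℝ]) (u v : ℍ[ℝ] × ℍ[ℝ])
    (hBL : (star z * qi * w).re = 0)
    (hu : (star u.1 * qi * w + star z * qi * u.2).re = 0)
    (hv : (star v.1 * qi * w + star z * qi * v.2).re = 0) :
    omegaH (ksTangent z w u) (ksTangent z w v) = 2 * normSq z ^ 2 * omegaH u v := by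
  linear_combination (norm := skip)
    (-2 * normSq z * (star z * qi * v.1).re) * hu + (2 * normSq z * (star z * qi * u.1).re) * hv
      + 4 * ((star z * qi * u.1).re * (star z * v.1).re - (star z * qi * v.1).re * (star z * u.1).re
        + (star z * qi * z * star u.1 * v.1).re) * hBL
  simp only [omegaH, ksTangent, inner_def, re_mul, imI_mul, imJ_mul, imK_mul, re_add, imI_add,
    imJ_add, imK_add, re_sub, imI_sub, imJ_sub, imK_sub, re_star, imI_star, imJ_star, imK_star,
    re_smul, imI_smul, imJ_smul, imK_smul, normSq_def', qi_re, qi_imI, qi_imJ, qi_imK, smul_eq_mul]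
  ring

theorem KS_symplectic (z w : Quaternion ℝ) (hz : z ≠ 0)
    (hBL : (star z * qi * w).re = 0)
    (u v : Quaternion ℝ × Quaternion ℝ)
    (hu : (star u.1 * qi * w + star z * qi * u.2).re = 0)
    (hv : (star v.1 * qi * w + star z * qi * v.2).re = 0) :
    omegaH (fderiv ℝ KS (z, w) u) (fderiv ℝ KS (z, w) v) = omegaH u v := by
  have hN : normSq z ≠ 0 := normSq_ne_zero.mpr hz
  rw [fderiv_KS_apply hz, fderiv_KS_apply hz, omegaH_smul_snd,
    omegaH_ksTangent z w u v hBL hu hv]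
  field_simp
end

section
/- Any smooth function on T*ℍ of the form (K.S.)*F (i.e. the pullback by the Kustaanheimo-Stiefel map of a function F on T*(Im ℍ), extended to all of ℍ∖{0} × ℍ by its defining formula) Poisson-commutes with BL(z,w) = Re{z̄ i w}; consequently BL is a first integral of the Hamiltonian flow of (K.S.)*F and the cone Σ⁰ = {BL = 0}∖{(0,0)} is flow-invariant. -/
open Real Quaternion

instance {R : Type*} [CommRing R] [StarRing R] [TrivialStar R] : StarModule R ℍ[R] :=
  ⟨fun r a => by ext <;> simp [re_smul, star_trivial]⟩

theorem HasFDerivAt.apply_eq_zero_of_constant_along {E F : Type*} [NormedAddCommGroup E]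
    [NormedSpace ℝ E] [NormedAddCommGroup F] [NormedSpace ℝ F] {G : E → F} {G' : E →L[ℝ] F}
    {x v : E} {c : ℝ → E} {t : ℝ} (hG : HasFDerivAt G G' x) (hc : HasDerivAt c v t)
    (hct : c t = x) (hconst : ∀ s, G (c s) = G x) : G' v = 0 := by
  subst hct
  exact (hG.comp_hasDerivAt t hc).unique <|
    (hasDerivAt_const t (G (c t))).congr_of_eventuallyEq (.of_forall hconst)

theorem star_mul_mul_self_of_commute {R : Type*} [Monoid R] [Star R] {u a : R}
    (hu : star u * u = 1) (hc : Commute u a) : star u * a * u = a := by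
  rw [mul_assoc, ← hc.eq, ← mul_assoc, hu, one_mul]

theorem KS_mul_left {u : Quaternion ℝ} (hu : ‖u‖ = 1) (hc : Commute u qi) (z w : Quaternion ℝ) :
    KS (u * z, u * w) = KS (z, w) := by
  have hstar : star u * u = 1 := by
    rw [star_mul_self, normSq_eq_norm_mul_self, hu, mul_one, coe_one]
  have hconj (y : Quaternion ℝ) : star (u * z) * qi * (u * y) = star z * qi * y :=
    calc star (u * z) * qi * (u * y) = star z * (star u * qi * u) * y := by
          simp only [star_mul, mul_assoc]
      _ = star z * qi * y := by rw [star_mul_mul_self_of_commute hstar hc]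
  simp only [KS, norm_mul, hu, one_mul, hconj]

theorem KS_differentiableAt {z : Quaternion ℝ} (hz : z ≠ 0) (w : Quaternion ℝ) :
    DifferentiableAt ℝ KS (z, w) := by
  have hconj (y : Quaternion ℝ × Quaternion ℝ → Quaternion ℝ) (hy : Differentiable ℝ y) :
      DifferentiableAt ℝ (fun p => star p.1 * qi * y p) (z, w) :=
    (differentiableAt_fst.star.mul_const qi).mul hy.differentiableAt
  have hnorm : DifferentiableAt ℝ (fun p : Quaternion ℝ × Quaternion ℝ => (2 * ‖p.1‖ ^ 2)⁻¹)
      (z, w) :=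
    ((differentiableAt_fst.norm_sq ℝ).const_mul 2).inv (by positivity)
  exact (hconj _ differentiable_fst).prodMk (hnorm.smul (hconj _ differentiable_snd))

noncomputable def cisI (θ : ℝ) : Quaternion ℝ := cos θ • 1 + sin θ • qi

theorem norm_cisI (θ : ℝ) : ‖cisI θ‖ = 1 := by
  have : ‖cisI θ‖ * ‖cisI θ‖ = 1 := by
    rw [← normSq_eq_norm_mul_self, normSq_def']
    simp [cisI, re_smul]
    simp [qi]
  nlinarith [norm_nonneg (cisI θ)]

theorem commute_cisI_qi (θ : ℝ) : Commute (cisI θ) qi :=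
  ((Commute.one_left qi).smul_left _).add_left ((Commute.refl qi).smul_left _)

theorem cisI_zero : cisI 0 = 1 := by simp [cisI]

theorem hasDerivAt_cisI_zero : HasDerivAt cisI qi 0 := by
  unfold cisI
  exact (((hasDerivAt_cos 0).smul_const 1).add ((hasDerivAt_sin 0).smul_const qi)).congr_deriv
    (by simp)

/- With respect to ω = Re{dw̄ ∧ dz} the Hamiltonian vector field of −BL is (iz, iw), so the
Poisson bracket {(K.S.)*F, BL} is, up to sign, the derivative of (K.S.)*F along (iz, iw). -/
theorem KS_pullback_poisson_commutes_BL
    (F : Quaternion ℝ × Quaternion ℝ → ℝ) (hF : Differentiable ℝ F)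
    (z w : Quaternion ℝ) (hz : z ≠ 0) :
    fderiv ℝ (fun p => F (KS p)) (z, w) (qi * z, qi * w) = 0 := by
  have horbit : HasDerivAt (fun θ => (cisI θ * z, cisI θ * w)) (qi * z, qi * w) 0 :=
    (hasDerivAt_cisI_zero.mul_const z).prodMk (hasDerivAt_cisI_zero.mul_const w)
  have hpullback := ((hF _).comp _ (KS_differentiableAt hz w)).hasFDerivAt
  refine hpullback.apply_eq_zero_of_constant_along horbit (by simp [cisI_zero]) fun θ => ?_
  exact congrArg F (KS_mul_left (norm_cisI θ) (commute_cisI_qi θ) z w)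
end

section
/- The pullback by K.S. of the time-rescaled Kepler Hamiltonian ‖Q‖(T(P,Q)+f), where T(P,Q) = ‖P‖²/(2μ₀) − μ₀M₀/‖Q‖, equals the harmonic-oscillator Hamiltonian K(z,w) = |w|²/(8μ₀) + f|z|² − μ₀M₀ on {(z,w) : z ≠ 0, Re{z̄ i w} = 0}. -/
lemma norm_qi : ‖qi‖ = 1 := by
  have h : ‖qi‖ * ‖qi‖ = 1 := by
    rw [← Quaternion.normSq_eq_norm_mul_self, Quaternion.normSq_def']
    simp [qi]
  nlinarith [norm_nonneg qi]

lemma norm_star_mul_qi_mul (z w : Quaternion ℝ) : ‖star z * qi * w‖ = ‖z‖ * ‖w‖ := by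
  rw [norm_mul, norm_mul, norm_star, norm_qi, mul_one]

lemma norm_ks_momentum (z w : Quaternion ℝ) :
    ‖((2 * ‖z‖ ^ 2)⁻¹ : ℝ) • (star z * qi * w)‖ = ‖w‖ / (2 * ‖z‖) := by
  rw [norm_smul, norm_star_mul_qi_mul, norm_inv, Real.norm_of_nonneg (by positivity)]
  by_cases hz : ‖z‖ = 0
  · simp [hz]
  · field_simp

lemma mul_kepler_energy_eq {r a μ c f : ℝ} (hr : r ≠ 0) :
    r ^ 2 * ((a / (2 * r)) ^ 2 / (2 * μ) - c / r ^ 2 + f) = a ^ 2 / (8 * μ) + f * r ^ 2 - c := by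
  field_simp
  ring

theorem KS_pullback_kepler_general (μ₀ M₀ f : ℝ)
    (z w : Quaternion ℝ) (hz : z ≠ 0) :
    (‖star z * qi * z‖) *
        (‖((2 * ‖z‖ ^ 2)⁻¹ : ℝ) • (star z * qi * w)‖ ^ 2 / (2 * μ₀)
          - μ₀ * M₀ / ‖star z * qi * z‖ + f)
      = ‖w‖ ^ 2 / (8 * μ₀) + f * ‖z‖ ^ 2 - μ₀ * M₀ := by
  rw [norm_ks_momentum, norm_star_mul_qi_mul, ← sq]
  exact mul_kepler_energy_eq (norm_ne_zero_iff.mpr hz)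

theorem KS_pullback_kepler (μ₀ M₀ f : ℝ) (hμ : 0 < μ₀) (hM : 0 < M₀) (hf : 0 < f)
    (z w : Quaternion ℝ) (hz : z ≠ 0) (hBL : (star z * qi * w).re = 0) :
    (‖star z * qi * z‖) *
        (‖((2 * ‖z‖ ^ 2)⁻¹ : ℝ) • (star z * qi * w)‖ ^ 2 / (2 * μ₀)
          - μ₀ * M₀ / ‖star z * qi * z‖ + f)
      = ‖w‖ ^ 2 / (8 * μ₀) + f * ‖z‖ ^ 2 - μ₀ * M₀ :=
  KS_pullback_kepler_general μ₀ M₀ f z w hz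
end

section
/- The Hopf map z ↦ z̄ i z sends every Levi-Civita plane (a 2-plane in ℍ spanned by v₁,v₂ with Re{v̄₁ i v₂} = 0) onto a 2-plane through the origin in Im ℍ. -/
/-- The Hopf map z ↦ z̄ i z. -/
noncomputable def hopf (z : Quaternion ℝ) : Quaternion ℝ := star z * qi * z

open Quaternion

lemma exists_sq_sub_sq_eq_and_two_mul_eq (c d : ℝ) :
    ∃ a b : ℝ, a ^ 2 - b ^ 2 = c ∧ 2 * a * b = d := by
  obtain ⟨z, hz⟩ := IsAlgClosed.exists_pow_nat_eq (c + d * Complex.I) two_pos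
  refine ⟨z.re, z.im, ?_, ?_⟩
  · simpa [sq] using congrArg Complex.re hz
  · have h := congrArg Complex.im hz
    simp only [sq, Complex.mul_im, Complex.add_im, Complex.ofReal_im, Complex.I_im,
      Complex.I_re, Complex.ofReal_re, mul_one, mul_zero, add_zero] at h
    linarith

lemma image_span_pair_eq_span_pair {M N : Type*} [AddCommGroup M] [Module ℝ M]
    [AddCommGroup N] [Module ℝ N] {f : M → N} {x y : M} {u v : N}
    (hf : ∀ a b : ℝ, f (a • x + b • y) = (a ^ 2 - b ^ 2) • u + (2 * a * b) • v) :
    f '' Submodule.span ℝ {x, y} = Submodule.span ℝ {u, v} := by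
  ext p
  simp only [Set.mem_image, SetLike.mem_coe, Submodule.mem_span_pair]
  constructor
  · rintro ⟨_, ⟨a, b, rfl⟩, rfl⟩
    exact ⟨_, _, (hf a b).symm⟩
  · rintro ⟨c, d, rfl⟩
    obtain ⟨a, b, rfl, rfl⟩ := exists_sq_sub_sq_eq_and_two_mul_eq c d
    exact ⟨_, ⟨a, b, rfl⟩, hf a b⟩

lemma Quaternion.mul_comm_eq_neg_of_re_eq_zero {A q : ℍ[ℝ]} (hA : A.re = 0) (hq : q.re = 0)
    (hAq : (A * q).re = 0) : q * A = -(A * q) := by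
  have h := self_add_star' (A * q)
  rw [star_mul, star_eq_neg.mpr hA, star_eq_neg.mpr hq, neg_mul_neg, hAq, mul_zero, coe_zero] at h
  exact eq_neg_of_add_eq_zero_right h

lemma Quaternion.star_mul_mul_self_of_re_eq_zero {A q : ℍ[ℝ]} (hA : A.re = 0) (hq : q.re = 0)
    (hAq : (A * q).re = 0) : star q * A * q = -((normSq q : ℝ) : ℍ[ℝ]) * A := by
  rw [star_eq_neg.mpr hq, neg_mul, mul_comm_eq_neg_of_re_eq_zero hA hq hAq, neg_neg, mul_assoc,
    ← sq, sq_eq_neg_normSq.mpr hq, mul_neg, ← (coe_commute (normSq q) A).eq, neg_mul]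

lemma star_qi : star qi = -qi :=
  star_eq_neg.mpr rfl

lemma re_hopf (z : ℍ[ℝ]) : (hopf z).re = 0 := by
  rw [← star_eq_neg, hopf, star_mul, star_mul, star_star, star_qi, neg_mul, mul_neg, mul_assoc]

lemma hopf_mul (z q : ℍ[ℝ]) : hopf (z * q) = star q * hopf z * q := by
  simp only [hopf, star_mul, mul_assoc]

lemma star_mul_qi_mul_comm {x y : ℍ[ℝ]} (h : (star x * qi * y).re = 0) :
    star y * qi * x = star x * qi * y := by
  have h' := star_eq_neg.mpr h
  rwa [star_mul, star_mul, star_star, star_qi, neg_mul, mul_neg, neg_inj, ← mul_assoc] at h'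

lemma hopf_smul_add_smul {x y : ℍ[ℝ]} (h : (star x * qi * y).re = 0) (a b : ℝ) :
    hopf (a • x + b • y) = a ^ 2 • hopf x + (2 * a * b) • (star x * qi * y) + b ^ 2 • hopf y := by
  simp only [hopf, star_add, Quaternion.star_smul, add_mul, mul_add, smul_mul_assoc, mul_smul_comm]
  rw [star_mul_qi_mul_comm h]
  module

lemma hopf_eq_neg_normSq_mul {x y : ℍ[ℝ]} (hx : ‖x‖ = 1) (hBL : (star x * qi * y).re = 0)
    (horth : (star x * y).re = 0) : hopf y = -((normSq y : ℝ) : ℍ[ℝ]) * hopf x := by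
  have hxx : x * star x = 1 := by
    rw [self_mul_star, normSq_eq_norm_mul_self, hx, mul_one, coe_one]
  have hy : x * (star x * y) = y := by rw [← mul_assoc, hxx, one_mul]
  have hxq : hopf x * (star x * y) = star x * qi * y := by
    rw [hopf, mul_assoc, mul_assoc, ← mul_assoc x, hxx, one_mul, mul_assoc]
  have hnorm : normSq (star x * y) = normSq y := by
    rw [map_mul, normSq_star, normSq_eq_norm_mul_self x, hx, one_mul, one_mul]
  rw [← hy, hopf_mul, star_mul_mul_self_of_re_eq_zero (re_hopf x) horth (hxq ▸ hBL), hnorm, hy]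

theorem hopf_image_levi_civita_plane (x y : Quaternion ℝ)
    (hx : ‖x‖ = 1) (hy : ‖y‖ = 1)
    (hBL : (star x * qi * y).re = 0) (horth : (star x * y).re = 0) :
    hopf '' (Submodule.span ℝ {x, y} : Submodule ℝ (Quaternion ℝ))
      = (Submodule.span ℝ {star x * qi * x, star x * qi * y} :
          Submodule ℝ (Quaternion ℝ)) := by
  have hopf_y : hopf y = -hopf x := by
    rw [hopf_eq_neg_normSq_mul hx hBL horth, normSq_eq_norm_mul_self, hy, mul_one, coe_one,
      neg_one_mul]
  refine image_span_pair_eq_span_pair fun a b => ?_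
  rw [hopf_smul_add_smul hBL, hopf_y, hopf]
  module
end

section
/- Rotation Lemma: let R₁^I denote simultaneous rotation of both factors of ℝ³×ℝ³ about the first axis by angle I, and R₃^h simultaneous rotation about the third axis by angle h. If (x'₁,x'₂,x'₃,y'₁,y'₂,y'₃) = R₃^h ∘ R₁^I (x₁,x₂,0,y₁,y₂,0), where I and h are (smooth) functions on the parameter space, then dy'₁∧dx'₁ + dy'₂∧dx'₂ + dy'₃∧dx'₃ = dy₁∧dx₁ + dy₂∧dx₂ + d(x'₁y'₂ − x'₂y'₁) ∧ dh. -/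
/-! R₃^h ∘ R₁^I sends (a₁, a₂, 0) to the planar rotation by h of (a₁, a₂ cos I), with third
coordinate a₂ sin I. Under a planar rotation by a variable angle θ, the form Σ dyᵢ ∧ dxᵢ picks up
exactly d(x₁y₂ − x₂y₁) ∧ dθ, and the angular momentum x₁y₂ − x₂y₁ is rotation invariant. The pair
(x₂ cos I, x₂ sin I) is (x₂, 0) rotated by I, whose angular momentum vanishes, so its two
coordinates together contribute just dy₂ ∧ dx₂. -/

noncomputable section

variable {E : Type*} [NormedAddCommGroup E] [NormedSpace ℝ E]

/-- First component of R₃^h ∘ R₁^I applied to (a₁, a₂, 0). -/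
def rot1 (a₁ a₂ I h : E → ℝ) (p : E) : ℝ :=
  a₁ p * Real.cos (h p) - a₂ p * Real.cos (I p) * Real.sin (h p)

/-- Second component of R₃^h ∘ R₁^I applied to (a₁, a₂, 0). -/
def rot2 (a₁ a₂ I h : E → ℝ) (p : E) : ℝ :=
  a₁ p * Real.sin (h p) + a₂ p * Real.cos (I p) * Real.cos (h p)

/-- Third component of R₃^h ∘ R₁^I applied to (a₁, a₂, 0). -/
def rot3 (a₁ a₂ I h : E → ℝ) (p : E) : ℝ :=
  a₂ p * Real.sin (I p)

/-- The 2-form df ∧ dg evaluated at p on tangent vectors u, v. -/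
def wedge2 (f g : E → ℝ) (p : E) (u v : E) : ℝ :=
  fderiv ℝ f p u * fderiv ℝ g p v - fderiv ℝ f p v * fderiv ℝ g p u

open Real

section

variable {α : Type*}

def planarRotFst (a₁ a₂ θ : α → ℝ) (p : α) : ℝ :=
  a₁ p * cos (θ p) - a₂ p * sin (θ p)

def planarRotSnd (a₁ a₂ θ : α → ℝ) (p : α) : ℝ :=
  a₁ p * sin (θ p) + a₂ p * cos (θ p)

theorem planarRotFst_mul_planarRotSnd_sub (a₁ a₂ b₁ b₂ θ : α → ℝ) (p : α) :
    planarRotFst a₁ a₂ θ p * planarRotSnd b₁ b₂ θ p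
      - planarRotSnd a₁ a₂ θ p * planarRotFst b₁ b₂ θ p = a₁ p * b₂ p - a₂ p * b₁ p := by
  unfold planarRotFst planarRotSnd
  linear_combination (a₁ p * b₂ p - a₂ p * b₁ p) * sin_sq_add_cos_sq (θ p)

end

section

variable {a a₁ a₂ b b₁ b₂ θ : E → ℝ} {p : E}

theorem fderiv_mul_cos_apply (ha : DifferentiableAt ℝ a p) (hθ : DifferentiableAt ℝ θ p)
    (w : E) : fderiv ℝ (fun q => a q * cos (θ q)) p w
      = fderiv ℝ a p w * cos (θ p) - a p * sin (θ p) * fderiv ℝ θ p w := by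
  rw [(ha.hasFDerivAt.fun_mul hθ.hasFDerivAt.cos).fderiv]
  simp only [add_apply, smul_apply, smul_eq_mul]
  ring

theorem fderiv_mul_sin_apply (ha : DifferentiableAt ℝ a p) (hθ : DifferentiableAt ℝ θ p)
    (w : E) : fderiv ℝ (fun q => a q * sin (θ q)) p w
      = fderiv ℝ a p w * sin (θ p) + a p * cos (θ p) * fderiv ℝ θ p w := by
  rw [(ha.hasFDerivAt.fun_mul hθ.hasFDerivAt.sin).fderiv]
  simp only [add_apply, smul_apply, smul_eq_mul]
  ring

theorem wedge2_mul_cos_add_wedge2_mul_sin (ha : DifferentiableAt ℝ a p)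
    (hb : DifferentiableAt ℝ b p) (hθ : DifferentiableAt ℝ θ p) (u v : E) :
    wedge2 (fun q => b q * cos (θ q)) (fun q => a q * cos (θ q)) p u v
      + wedge2 (fun q => b q * sin (θ q)) (fun q => a q * sin (θ q)) p u v
      = wedge2 b a p u v := by
  simp only [wedge2, fderiv_mul_cos_apply ha hθ, fderiv_mul_cos_apply hb hθ,
    fderiv_mul_sin_apply ha hθ, fderiv_mul_sin_apply hb hθ]
  linear_combination (fderiv ℝ b p u * fderiv ℝ a p v - fderiv ℝ b p v * fderiv ℝ a p u)
    * sin_sq_add_cos_sq (θ p)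

theorem fderiv_planarRotFst_apply (ha₁ : DifferentiableAt ℝ a₁ p)
    (ha₂ : DifferentiableAt ℝ a₂ p) (hθ : DifferentiableAt ℝ θ p) (w : E) :
    fderiv ℝ (planarRotFst a₁ a₂ θ) p w
      = fderiv ℝ (fun q => a₁ q * cos (θ q)) p w - fderiv ℝ (fun q => a₂ q * sin (θ q)) p w := by
  change fderiv ℝ (fun q => a₁ q * cos (θ q) - a₂ q * sin (θ q)) p w = _
  rw [fderiv_fun_sub (ha₁.fun_mul hθ.cos) (ha₂.fun_mul hθ.sin)]
  rfl

theorem fderiv_planarRotSnd_apply (ha₁ : DifferentiableAt ℝ a₁ p)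
    (ha₂ : DifferentiableAt ℝ a₂ p) (hθ : DifferentiableAt ℝ θ p) (w : E) :
    fderiv ℝ (planarRotSnd a₁ a₂ θ) p w
      = fderiv ℝ (fun q => a₁ q * sin (θ q)) p w + fderiv ℝ (fun q => a₂ q * cos (θ q)) p w := by
  change fderiv ℝ (fun q => a₁ q * sin (θ q) + a₂ q * cos (θ q)) p w = _
  rw [fderiv_fun_add (ha₁.fun_mul hθ.sin) (ha₂.fun_mul hθ.cos)]
  rfl

theorem fderiv_mul_sub_mul_apply (ha₁ : DifferentiableAt ℝ a₁ p)
    (ha₂ : DifferentiableAt ℝ a₂ p) (hb₁ : DifferentiableAt ℝ b₁ p)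
    (hb₂ : DifferentiableAt ℝ b₂ p) (w : E) :
    fderiv ℝ (fun q => a₁ q * b₂ q - a₂ q * b₁ q) p w
      = fderiv ℝ a₁ p w * b₂ p + a₁ p * fderiv ℝ b₂ p w
        - (fderiv ℝ a₂ p w * b₁ p + a₂ p * fderiv ℝ b₁ p w) := by
  rw [fderiv_fun_sub (ha₁.fun_mul hb₂) (ha₂.fun_mul hb₁), fderiv_fun_mul ha₁ hb₂,
    fderiv_fun_mul ha₂ hb₁]
  simp only [sub_apply, add_apply, smul_apply, smul_eq_mul]
  ring

theorem wedge2_planarRot_add (ha₁ : DifferentiableAt ℝ a₁ p) (ha₂ : DifferentiableAt ℝ a₂ p)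
    (hb₁ : DifferentiableAt ℝ b₁ p) (hb₂ : DifferentiableAt ℝ b₂ p)
    (hθ : DifferentiableAt ℝ θ p) (u v : E) :
    wedge2 (planarRotFst b₁ b₂ θ) (planarRotFst a₁ a₂ θ) p u v
      + wedge2 (planarRotSnd b₁ b₂ θ) (planarRotSnd a₁ a₂ θ) p u v
      = wedge2 b₁ a₁ p u v + wedge2 b₂ a₂ p u v
        + wedge2 (fun q => a₁ q * b₂ q - a₂ q * b₁ q) θ p u v := by
  -- every term on the left carries the factor sin² θ + cos² θ
  rw [← one_mul (wedge2 b₁ a₁ p u v + _ + _), ← sin_sq_add_cos_sq (θ p)]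
  simp only [wedge2, fderiv_planarRotFst_apply ha₁ ha₂ hθ, fderiv_planarRotFst_apply hb₁ hb₂ hθ,
    fderiv_planarRotSnd_apply ha₁ ha₂ hθ, fderiv_planarRotSnd_apply hb₁ hb₂ hθ,
    fderiv_mul_cos_apply ha₁ hθ, fderiv_mul_cos_apply ha₂ hθ, fderiv_mul_cos_apply hb₁ hθ,
    fderiv_mul_cos_apply hb₂ hθ, fderiv_mul_sin_apply ha₁ hθ, fderiv_mul_sin_apply ha₂ hθ,
    fderiv_mul_sin_apply hb₁ hθ, fderiv_mul_sin_apply hb₂ hθ,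
    fderiv_mul_sub_mul_apply ha₁ ha₂ hb₁ hb₂]
  ring

end

theorem rotation_lemma (x₁ x₂ y₁ y₂ I h : E → ℝ)
    (hx₁ : Differentiable ℝ x₁) (hx₂ : Differentiable ℝ x₂)
    (hy₁ : Differentiable ℝ y₁) (hy₂ : Differentiable ℝ y₂)
    (hI : Differentiable ℝ I) (hh : Differentiable ℝ h)
    (p : E) (u v : E) :
    wedge2 (rot1 y₁ y₂ I h) (rot1 x₁ x₂ I h) p u v
      + wedge2 (rot2 y₁ y₂ I h) (rot2 x₁ x₂ I h) p u v
      + wedge2 (rot3 y₁ y₂ I h) (rot3 x₁ x₂ I h) p u v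
    = wedge2 y₁ x₁ p u v + wedge2 y₂ x₂ p u v
      + wedge2 (fun q => rot1 x₁ x₂ I h q * rot2 y₁ y₂ I h q
            - rot2 x₁ x₂ I h q * rot1 y₁ y₂ I h q) h p u v := by
  have cross_eq : (fun q => rot1 x₁ x₂ I h q * rot2 y₁ y₂ I h q
      - rot2 x₁ x₂ I h q * rot1 y₁ y₂ I h q)
      = fun q => x₁ q * (y₂ q * cos (I q)) - x₂ q * cos (I q) * y₁ q :=
    funext (planarRotFst_mul_planarRotSnd_sub _ _ _ _ h)
  have hx₂I := (hx₂ p).fun_mul (hI p).cos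
  have hy₂I := (hy₂ p).fun_mul (hI p).cos
  calc _ = (wedge2 y₁ x₁ p u v
            + wedge2 (fun q => y₂ q * cos (I q)) (fun q => x₂ q * cos (I q)) p u v
            + wedge2 (fun q => x₁ q * (y₂ q * cos (I q)) - x₂ q * cos (I q) * y₁ q) h p u v)
          + wedge2 (fun q => y₂ q * sin (I q)) (fun q => x₂ q * sin (I q)) p u v := by
        rw [← wedge2_planarRot_add (hx₁ p) hx₂I (hy₁ p) hy₂I (hh p)]
        rfl
    _ = _ := by
        rw [cross_eq, ← wedge2_mul_cos_add_wedge2_mul_sin (hx₂ p) (hy₂ p) (hI p)]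
        ring

end
end
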